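/- arXiv:1704.05557 — 5 statements merged into one kernel-verified Lean document; each statement's English description precedes it below -/
import Mathlib

section
/- For all integers ℓ, m ≥ 0, the number b_{ℓ,m} := C(2(ℓ+1), ℓ+1) · C(2(m+1), m+1) · (ℓ+1)(m+1) / (2(ℓ+m+1)(ℓ+m+2)) is a positive integer (where C(n,k) denotes the binomial coefficient). -/
noncomputable def b (l m : ℕ) : ℚ :=
  (Nat.choose (2 * (l + 1)) (l + 1) : ℚ) * (Nat.choose (2 * (m + 1)) (m + 1) : ℚ) *
    ((l + 1) * (m + 1)) / (2 * (l + m + 1) * (l + m + 2))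

/-!
Up to the integer factor `C(ℓ+m, ℓ)`, `b_{ℓ,m}` is half of Gessel's super Catalan number
`S(ℓ+1, m+1)`, where `S(m, n) = (2m)! (2n)! / (m! n! (m+n)!)`. These numbers satisfy
`S(m+1, n) = 4 S(m, n) - S(m, n+1)`, and `S(1, n) = 2 Cat(n)`; by induction on `m` every
`S(m+1, n)` is therefore an even integer.
-/

open Nat

noncomputable def superCatalan (m n : ℕ) : ℚ :=
  (2 * m)! * (2 * n)! / (m ! * n ! * (m + n)!)

theorem superCatalan_succ_left (m n : ℕ) :
    superCatalan (m + 1) n = 4 * superCatalan m n - superCatalan m (n + 1) := by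
  simp only [superCatalan, show 2 * (m + 1) = 2 * m + 1 + 1 by ring,
    show 2 * (n + 1) = 2 * n + 1 + 1 by ring, show m + 1 + n = m + n + 1 by ring,
    show m + (n + 1) = m + n + 1 by ring, factorial_succ]
  push_cast
  field_simp
  ring

theorem superCatalan_one_left (n : ℕ) : superCatalan 1 n = 2 * catalan n := by
  have hcentral : (n + 1) * catalan n * n ! * n ! = (2 * n)! := by
    rw [succ_mul_catalan_eq_centralBinom, centralBinom_eq_two_mul_choose]
    simpa [two_mul] using choose_mul_factorial_mul_factorial (n := 2 * n) (k := n) (by omega)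
  have hcentral' : ((n : ℚ) + 1) * catalan n * n ! * n ! = (2 * n)! := by
    exact_mod_cast hcentral
  rw [superCatalan, add_comm 1 n, factorial_succ n]
  norm_num
  field_simp
  linear_combination -hcentral'

theorem exists_superCatalan_succ_left_eq_two_mul (m n : ℕ) :
    ∃ z : ℤ, superCatalan (m + 1) n = 2 * z := by
  induction m generalizing n with
  | zero => exact ⟨catalan n, by simp [superCatalan_one_left]⟩
  | succ m ih =>
    obtain ⟨x, hx⟩ := ih n
    obtain ⟨y, hy⟩ := ih (n + 1)
    exact ⟨4 * x - y, by rw [superCatalan_succ_left, hx, hy]; push_cast; ring⟩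

theorem two_mul_b_eq (l m : ℕ) :
    2 * b l m = superCatalan (l + 1) (m + 1) * (l + m).choose l := by
  rw [b, superCatalan, cast_choose ℚ (show l ≤ l + m by omega),
    cast_choose ℚ (show l + 1 ≤ 2 * (l + 1) by omega),
    cast_choose ℚ (show m + 1 ≤ 2 * (m + 1) by omega)]
  simp only [show 2 * (l + 1) - (l + 1) = l + 1 by omega,
    show 2 * (m + 1) - (m + 1) = m + 1 by omega, show l + m - l = m by omega,
    show l + 1 + (m + 1) = l + m + 1 + 1 by ring, factorial_succ]
  push_cast
  field_simp
  ring

theorem exists_int_eq_b (l m : ℕ) : ∃ z : ℤ, b l m = z := by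
  obtain ⟨z, hz⟩ := exists_superCatalan_succ_left_eq_two_mul l (m + 1)
  refine ⟨z * (l + m).choose l, ?_⟩
  have h := two_mul_b_eq l m
  rw [hz] at h
  push_cast
  linarith

theorem b_pos (l m : ℕ) : 0 < b l m := by
  have := choose_pos (show l + 1 ≤ 2 * (l + 1) by omega)
  have := choose_pos (show m + 1 ≤ 2 * (m + 1) by omega)
  unfold b
  positivity

theorem stmt_0 (l m : ℕ) : ∃ k : ℕ, 0 < k ∧ b l m = (k : ℚ) := by
  obtain ⟨z, hz⟩ := exists_int_eq_b l m
  have hpos : 0 < z := by exact_mod_cast hz ▸ b_pos l m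
  lift z to ℕ using hpos.le
  exact ⟨z, by exact_mod_cast hpos, by exact_mod_cast hz⟩
end

section
/- For all ℓ ≥ 0, b_{ℓ,1} = 2·(Cat(ℓ+2) − Cat(ℓ+1)), where Cat(n) is the n-th Catalan number and b_{ℓ,m} = C(2(ℓ+1), ℓ+1)·C(2(m+1), m+1)·(ℓ+1)(m+1)/(2(ℓ+m+1)(ℓ+m+2)). -/
/-! Both sides equal `6 (ℓ + 1) Cat(ℓ + 1) / (ℓ + 3)`: on the left because
`C(2n, n) = (n + 1) Cat(n)`, on the right by the ratio `Cat(n + 1) / Cat(n) = 2(2n + 1) / (n + 2)`. -/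

theorem succ_succ_mul_catalan_succ (n : ℕ) :
    (n + 2) * catalan (n + 1) = 2 * (2 * n + 1) * catalan n := by
  apply Nat.eq_of_mul_eq_mul_left n.succ_pos
  calc (n + 1) * ((n + 2) * catalan (n + 1))
      = (n + 1) * Nat.centralBinom (n + 1) := by rw [← succ_mul_catalan_eq_centralBinom]
    _ = 2 * (2 * n + 1) * Nat.centralBinom n := Nat.succ_mul_centralBinom_succ n
    _ = (n + 1) * (2 * (2 * n + 1) * catalan n) := by
      rw [← succ_mul_catalan_eq_centralBinom]; ring

theorem succ_succ_mul_catalan_succ_sub_catalan (n : ℕ) :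
    ((n : ℚ) + 2) * (catalan (n + 1) - catalan n) = 3 * n * catalan n := by
  have h : ((n : ℚ) + 2) * catalan (n + 1) = 2 * (2 * n + 1) * catalan n := by
    exact_mod_cast succ_succ_mul_catalan_succ n
  linear_combination h

theorem add_three_mul_b_one (l : ℕ) :
    ((l : ℚ) + 3) * b l 1 = 6 * (l + 1) * catalan (l + 1) := by
  have hcentral : (Nat.choose (2 * (l + 1)) (l + 1) : ℚ) = (l + 2) * catalan (l + 1) := by
    rw [← Nat.centralBinom_eq_two_mul_choose, ← succ_mul_catalan_eq_centralBinom]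
    push_cast; ring
  have hl : ((l : ℚ) + 2) ≠ 0 := by positivity
  rw [b, hcentral, show Nat.choose (2 * (1 + 1)) (1 + 1) = 6 from rfl]
  field_simp
  ring

theorem stmt_2 (l : ℕ) :
    b l 1 = 2 * ((catalan (l + 2) : ℚ) - (catalan (l + 1) : ℚ)) := by
  have hb := add_three_mul_b_one l
  have hcat := succ_succ_mul_catalan_succ_sub_catalan (l + 1)
  have hl : ((l : ℚ) + 3) ≠ 0 := by positivity
  apply mul_left_cancel₀ hl
  push_cast at hcat
  linear_combination hb - 2 * hcat
end

section
/- For all integers N ≥ 1 and 0 ≤ p ≤ N−1, the partial Catalan convolution satisfies: ∑_{j=0}^{p} Cat(j)·Cat(N−j) = (1/2)·(Cat(N+1) + b_{N−p,p} − b_{N−p−1,p+1}), where Cat is the Catalan number and b_{ℓ,m} = C(2(ℓ+1), ℓ+1)·C(2(m+1), m+1)·(ℓ+1)(m+1)/(2(ℓ+m+1)(ℓ+m+2)). -/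
theorem catalan_succ_eq_mul_catalan (n : ℕ) :
    (catalan (n + 1) : ℚ) = 2 * (2 * n + 1) / (n + 2) * catalan n := by
  rw [div_mul_eq_mul_div, eq_div_iff (by positivity), mul_comm]
  exact_mod_cast succ_succ_mul_catalan_succ n

theorem b_eq_catalan (l m : ℕ) :
    b l m = (l + 1) * (l + 2) * catalan (l + 1) * ((m + 1) * (m + 2) * catalan (m + 1)) /
      (2 * (l + m + 1) * (l + m + 2)) := by
  simp only [b, ← Nat.centralBinom_eq_two_mul_choose, ← succ_mul_catalan_eq_centralBinom]
  push_cast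
  ring

theorem b_zero_right (l : ℕ) : b l 0 = catalan (l + 1) := by
  rw [b_eq_catalan]
  norm_num [catalan_one]
  field_simp

theorem b_one_right (l : ℕ) : b l 1 = 2 * catalan (l + 2) - 2 * catalan (l + 1) := by
  rw [b_eq_catalan, catalan_succ_eq_mul_catalan (l + 1)]
  norm_num [catalan_two]
  field_simp
  ring

theorem two_mul_b_succ_succ (k m : ℕ) :
    2 * b (k + 1) (m + 1) = b (k + 2) m + b k (m + 2) + 2 * catalan (k + 1) * catalan (m + 1) := by
  simp only [b_eq_catalan, catalan_succ_eq_mul_catalan]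
  push_cast
  field_simp
  ring

theorem sum_range_succ_catalan_mul_catalan_sub (N p : ℕ) (hp : p < N) :
    (∑ j ∈ Finset.range (p + 1), (catalan j : ℚ) * catalan (N - j)) =
      1 / 2 * (catalan (N + 1) + b (N - p) p - b (N - p - 1) (p + 1)) := by
  induction p with
  | zero =>
    obtain ⟨k, rfl⟩ : ∃ k, N = k + 1 := ⟨N - 1, by omega⟩
    simp only [zero_add, Finset.sum_range_one, catalan_zero, Nat.cast_one, one_mul,
      Nat.sub_zero, Nat.add_sub_cancel, b_zero_right, b_one_right]
    ring
  | succ p ih =>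
    obtain ⟨k, hk⟩ : ∃ k, N - p = k + 2 := ⟨N - p - 2, by omega⟩
    rw [Finset.sum_range_succ, ih (by omega), hk, show N - (p + 1) = k + 1 by omega,
      show k + 2 - 1 = k + 1 from rfl, Nat.add_sub_cancel]
    linear_combination (-1 / 2 : ℚ) * two_mul_b_succ_succ k p

theorem stmt_4 (N p : ℕ) (hN : 1 ≤ N) (hp : p ≤ N - 1) :
    (∑ j ∈ Finset.range (p + 1), (catalan j : ℚ) * (catalan (N - j) : ℚ)) =
      (1 / 2) * ((catalan (N + 1) : ℚ) + b (N - p) p - b (N - p - 1) (p + 1)) :=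
  sum_range_succ_catalan_mul_catalan_sub N p (by omega)
end

section
/- For all integers N ≥ 1 and 0 ≤ p ≤ N−1: b_{N−p+1,p−1} + b_{N−p−1,p+1} + 2·Cat(p)·Cat(N−p) = 2·b_{N−p,p}, where Cat is the Catalan number and b_{ℓ,m} = C(2(ℓ+1), ℓ+1)·C(2(m+1), m+1)·(ℓ+1)(m+1)/(2(ℓ+m+1)(ℓ+m+2)). (For p = 0 interpret b with index −1 via the same rational formula, or restrict to 1 ≤ p ≤ N−1.) -/
open Nat

section CentralBinom

variable {K : Type*} [Field K] [CharZero K]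

theorem cast_centralBinom_succ (n : ℕ) :
    (centralBinom (n + 1) : K) = 2 * (2 * n + 1) / (n + 1) * centralBinom n := by
  rw [div_mul_eq_mul_div, eq_div_iff n.cast_add_one_ne_zero, mul_comm]
  exact_mod_cast succ_mul_centralBinom_succ n

theorem cast_catalan (n : ℕ) : (catalan n : K) = centralBinom n / (n + 1) := by
  rw [eq_div_iff n.cast_add_one_ne_zero, mul_comm]
  exact_mod_cast succ_mul_catalan_eq_centralBinom n

end CentralBinom

theorem b_eq_centralBinom (l m : ℕ) :
    b l m = 2 * (2 * l + 1) * (2 * m + 1) * centralBinom l * centralBinom m /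
      ((l + m + 1) * (l + m + 2)) := by
  simp only [b, ← centralBinom_eq_two_mul_choose, cast_centralBinom_succ]
  field_simp

theorem b_add_b_add_two_mul_catalan (a c : ℕ) :
    b (c + 2) a + b c (a + 2) + 2 * (catalan (a + 1) : ℚ) * catalan (c + 1) =
      2 * b (c + 1) (a + 1) := by
  simp only [b_eq_centralBinom, cast_catalan, cast_centralBinom_succ]
  push_cast
  field_simp
  ring

theorem stmt_5_general (N p : ℕ) (hp1 : 1 ≤ p) (hp : p ≤ N - 1) :
    b (N - p + 1) (p - 1) + b (N - p - 1) (p + 1) +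
        2 * (catalan p : ℚ) * (catalan (N - p) : ℚ) =
      2 * b (N - p) p := by
  obtain ⟨a, rfl⟩ : ∃ a, p = a + 1 := ⟨p - 1, by omega⟩
  obtain ⟨c, hc⟩ : ∃ c, N - (a + 1) = c + 1 := ⟨N - (a + 1) - 1, by omega⟩
  simpa [hc] using b_add_b_add_two_mul_catalan a c

theorem stmt_5 (N p : ℕ) (hN : 1 ≤ N) (hp1 : 1 ≤ p) (hp : p ≤ N - 1) :
    b (N - p + 1) (p - 1) + b (N - p - 1) (p + 1) +
        2 * (catalan p : ℚ) * (catalan (N - p) : ℚ) =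
      2 * b (N - p) p :=
  stmt_5_general N p hp1 hp
end

section
/- For all ℓ, m ≥ 0, (m+1)·Cat(ℓ+m+1) ≥ b_{ℓ,m}, where Cat is the Catalan number and b_{ℓ,m} = C(2(ℓ+1), ℓ+1)·C(2(m+1), m+1)·(ℓ+1)(m+1)/(2(ℓ+m+1)(ℓ+m+2)). -/
/-- Induction on `m`: raising `m` by one multiplies the left side by `2(2m+3)/(m+2)` and the
right side by `2(2n+1)/n` with `n = l+m+1`, and `(2m+3)n ≤ (m+2)(2n+1)`. -/
theorem Nat.succ_mul_centralBinom_succ_mul_centralBinom_succ_le (l m : ℕ) :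
    (l + 1) * (l + 1).centralBinom * (m + 1).centralBinom
      ≤ 2 * (l + m + 1) * (l + m + 1).centralBinom := by
  induction m with
  | zero =>
    have hcb1 : (0 + 1).centralBinom = 2 := rfl
    rw [hcb1]
    exact le_of_eq (by ring)
  | succ m ih =>
    set n := l + m + 1
    have hm := Nat.succ_mul_centralBinom_succ (m + 1)
    have hn := Nat.succ_mul_centralBinom_succ n
    have hratio : (2 * (m + 1) + 1) * n ≤ (m + 2) * (2 * n + 1) := by nlinarith
    refine Nat.le_of_mul_le_mul_left ?_ (show 0 < m + 2 by omega)
    calc (m + 2) * ((l + 1) * (l + 1).centralBinom * (m + 1 + 1).centralBinom)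
        = 2 * (2 * (m + 1) + 1) * ((l + 1) * (l + 1).centralBinom * (m + 1).centralBinom) := by
          rw [show (m + 2) * ((l + 1) * (l + 1).centralBinom * (m + 1 + 1).centralBinom)
            = (l + 1) * (l + 1).centralBinom * ((m + 1 + 1) * (m + 1 + 1).centralBinom) by ring, hm]
          ring
      _ ≤ 2 * (2 * (m + 1) + 1) * (2 * n * n.centralBinom) := Nat.mul_le_mul_left _ ih
      _ = 4 * ((2 * (m + 1) + 1) * n) * n.centralBinom := by ring
      _ ≤ 4 * ((m + 2) * (2 * n + 1)) * n.centralBinom := by gcongr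
      _ = (m + 2) * (2 * (l + (m + 1) + 1) * (l + (m + 1) + 1).centralBinom) := by
          rw [show l + (m + 1) + 1 = n + 1 by omega, mul_assoc 2, hn]; ring

theorem stmt_19 (l m : ℕ) :
    b l m ≤ (m + 1 : ℚ) * (catalan (l + m + 1) : ℚ) := by
  have hkey : ((l + 1) * (l + 1).centralBinom * (m + 1).centralBinom : ℚ)
      ≤ 2 * (l + m + 1) * (l + m + 1).centralBinom := by
    exact_mod_cast Nat.succ_mul_centralBinom_succ_mul_centralBinom_succ_le l m
  have hcat : ((l + m + 2) * catalan (l + m + 1) : ℚ) = (l + m + 1).centralBinom := by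
    exact_mod_cast succ_mul_catalan_eq_centralBinom (l + m + 1)
  rw [b, div_le_iff₀ (by positivity)]
  calc ((l + 1).centralBinom * (m + 1).centralBinom * ((l + 1) * (m + 1)) : ℚ)
      = (m + 1) * ((l + 1) * (l + 1).centralBinom * (m + 1).centralBinom) := by ring
    _ ≤ (m + 1) * (2 * (l + m + 1) * (l + m + 1).centralBinom) := by gcongr
    _ = (m + 1) * catalan (l + m + 1) * (2 * (l + m + 1) * (l + m + 2)) := by rw [← hcat]; ring
end
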